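/- For a Pólya urn started with b black and w white balls (b > w ≥ 1), the equalization probability 2·F^Beta_{b,w}(1/2) is strictly between 0 and 1; in particular P(∃ n, B_n = W_n) < 1. -/

import Mathlib

open MeasureTheory ProbabilityTheory Filter

/-- The density of the Beta(b,w) distribution. -/
noncomputable def betaDensity (b w : ℕ) (p : ℝ) : ℝ :=
  Real.Gamma (b + w) / (Real.Gamma b * Real.Gamma w) * p ^ (b - 1) * (1 - p) ^ (w - 1)

/-- The CDF of the Beta(b,w) distribution. -/
noncomputable def betaCDF (b w : ℕ) (x : ℝ) : ℝ :=
  ∫ p in Set.Ioo (0 : ℝ) x, betaDensity b w p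

/-- The event that the first draws are exactly the sequence `ε` (`true` = black). -/
def drawsEq {Ω : Type*} (X : ℕ → Ω → Bool) (ε : List Bool) : Set Ω :=
  {ω | List.ofFn (fun i : Fin ε.length => X (i : ℕ) ω) = ε}

/-- `X` is the draw process of a Pólya urn started with `b` black and `w` white balls:
given any history `ε` of draws, the next ball drawn is black with probability
(current number of black balls)/(current total number of balls). -/
def IsPolyaUrn {Ω : Type*} [MeasurableSpace Ω] (P : Measure Ω)
    (X : ℕ → Ω → Bool) (b w : ℕ) : Prop :=
  (∀ i, Measurable (X i)) ∧
  ∀ ε : List Bool,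
    P (drawsEq X (ε ++ [true])) =
      ENNReal.ofReal (((b : ℝ) + ε.count true) / ((b : ℝ) + w + ε.length)) *
        P (drawsEq X ε)

/-- Number of black balls in the urn after `n` draws. -/
def blackCount {Ω : Type*} (X : ℕ → Ω → Bool) (b n : ℕ) (ω : Ω) : ℕ :=
  b + ((Finset.range n).filter fun i => X i ω = true).card

/-- Number of white balls in the urn after `n` draws. -/
def whiteCount {Ω : Type*} (X : ℕ → Ω → Bool) (w n : ℕ) (ω : Ω) : ℕ :=
  w + ((Finset.range n).filter fun i => X i ω = false).card

/-! For `w < b` the Beta(b,w) density on `(0, 1/2)` lies strictly below its mirror image under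
`p ↦ 1 - p`; since the total mass is `1`, the mass of `(0, 1/2)` is positive but less than `1/2`.

For the urn, the fraction of black balls is a martingale over the tree of draw histories, and so is
its version stopped at the first balanced state, where it equals `1/2`. Its expectation after `n`
draws is therefore `b/(b+w)`, and since it is `1/2` on the event `E_n` of balancing within `n` draws
and at most `1` off it, `b/(b+w) ≤ 1 - P(E_n)/2`, i.e. `P(E_n) ≤ 2w/(b+w) < 1` uniformly in `n`. -/

section Beta

open Set intervalIntegral

lemma integral_betaPDFReal {α β : ℝ} (hα : 0 < α) (hβ : 0 < β) :
    ∫ x, betaPDFReal α β x = 1 := by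
  have hnonneg : 0 ≤ betaPDFReal α β := fun x => by
    by_cases hx : 0 < x ∧ x < 1
    · exact (betaPDFReal_pos hx.1 hx.2 hα hβ).le
    · rw [Pi.zero_apply, betaPDFReal, if_neg hx]
  rw [integral_eq_lintegral_of_nonneg_ae (.of_forall hnonneg)
    (measurable_betaPDFReal α β).aestronglyMeasurable]
  exact (congrArg ENNReal.toReal (lintegral_betaPDF_eq_one hα hβ)).trans ENNReal.toReal_one

variable {b w : ℕ}

lemma continuous_betaDensity : Continuous (betaDensity b w) := by
  unfold betaDensity
  fun_prop

lemma betaDensity_eq_betaPDFReal (hb : 1 ≤ b) (hw : 1 ≤ w) {p : ℝ} (hp : p ∈ Ioo 0 1) :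
    betaDensity b w p = betaPDFReal b w p := by
  rw [betaPDFReal, if_pos (show 0 < p ∧ p < 1 from hp), betaDensity, ProbabilityTheory.beta,
    one_div_div, ← Nat.cast_pred hb, ← Nat.cast_pred hw, Real.rpow_natCast, Real.rpow_natCast]

lemma betaDensity_pos (hb : 1 ≤ b) (hw : 1 ≤ w) {p : ℝ} (hp : p ∈ Ioo 0 1) :
    0 < betaDensity b w p := by
  rw [betaDensity_eq_betaPDFReal hb hw hp]
  exact betaPDFReal_pos hp.1 hp.2 (by exact_mod_cast hb) (by exact_mod_cast hw)

lemma betaDensity_lt_betaDensity_one_sub (hw : 1 ≤ w) (hwb : w < b) {p : ℝ}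
    (hp : p ∈ Ioo 0 (1 / 2)) : betaDensity b w p < betaDensity b w (1 - p) := by
  have hp1 : p < 1 - p := by linarith [hp.2]
  set C := Real.Gamma (b + w) / (Real.Gamma b * Real.Gamma w)
  have hC : 0 < C * p ^ (w - 1) * (1 - p) ^ (w - 1) := by
    have := Real.Gamma_pos_of_pos (show (0 : ℝ) < b + w by positivity)
    have := Real.Gamma_pos_of_pos (show (0 : ℝ) < b by exact_mod_cast (hw.trans_lt hwb).le)
    have := Real.Gamma_pos_of_pos (show (0 : ℝ) < w by exact_mod_cast hw)
    have := hp.1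
    have : 0 < 1 - p := by linarith
    positivity
  calc betaDensity b w p = C * p ^ (w - 1) * (1 - p) ^ (w - 1) * p ^ (b - w) := by
        rw [betaDensity, show b - 1 = (w - 1) + (b - w) by omega, pow_add]; ring
    _ < C * p ^ (w - 1) * (1 - p) ^ (w - 1) * (1 - p) ^ (b - w) :=
        mul_lt_mul_of_pos_left (pow_lt_pow_left₀ hp1 hp.1.le (by omega)) hC
    _ = betaDensity b w (1 - p) := by
        rw [betaDensity, sub_sub_cancel, show b - 1 = (w - 1) + (b - w) by omega, pow_add]; ring

lemma betaCDF_eq_integral {x : ℝ} (hx : 0 ≤ x) :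
    betaCDF b w x = ∫ p in 0..x, betaDensity b w p := by
  rw [integral_of_le hx, integral_Ioc_eq_integral_Ioo, betaCDF]

lemma betaCDF_one (hb : 1 ≤ b) (hw : 1 ≤ w) : betaCDF b w 1 = 1 := by
  have hsupp : ∫ x in Ioo 0 1, betaPDFReal b w x = ∫ x, betaPDFReal b w x :=
    setIntegral_eq_integral_of_forall_compl_eq_zero fun x hx => if_neg hx
  rw [betaCDF, setIntegral_congr_fun measurableSet_Ioo fun p hp =>
    betaDensity_eq_betaPDFReal hb hw hp, hsupp,
    integral_betaPDFReal (by exact_mod_cast hb) (by exact_mod_cast hw)]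

theorem betaCDF_half_pos (hb : 1 ≤ b) (hw : 1 ≤ w) : 0 < betaCDF b w (1 / 2) := by
  rw [betaCDF_eq_integral (by norm_num)]
  exact intervalIntegral_pos_of_pos_on (continuous_betaDensity.intervalIntegrable _ _)
    (fun p hp => betaDensity_pos hb hw ⟨hp.1, by linarith [hp.2]⟩) (by norm_num)

theorem two_mul_betaCDF_half_lt_one (hw : 1 ≤ w) (hwb : w < b) :
    2 * betaCDF b w (1 / 2) < 1 := by
  have hint : ∀ x y : ℝ, IntervalIntegrable (betaDensity b w) volume x y :=
    continuous_betaDensity.intervalIntegrable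
  have hsplit : betaCDF b w (1 / 2) + ∫ p in 1 / 2..1, betaDensity b w p = 1 := by
    rw [betaCDF_eq_integral (by norm_num), integral_add_adjacent_intervals (hint _ _) (hint _ _),
      ← betaCDF_eq_integral zero_le_one, betaCDF_one (by omega) hw]
  have hlt : betaCDF b w (1 / 2) < ∫ p in 1 / 2..1, betaDensity b w p :=
    calc betaCDF b w (1 / 2) = ∫ p in 0..1 / 2, betaDensity b w p :=
          betaCDF_eq_integral (by norm_num)
      _ < ∫ p in 0..1 / 2, betaDensity b w (1 - p) :=
          integral_lt_integral_of_continuousOn_of_le_of_exists_lt (by norm_num)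
            continuous_betaDensity.continuousOn
            (continuous_betaDensity.comp (continuous_sub_left 1)).continuousOn
            (fun p hp => hp.2.eq_or_lt.elim (fun h => by rw [h]; norm_num)
              fun h => (betaDensity_lt_betaDensity_one_sub hw hwb ⟨hp.1, h⟩).le)
            ⟨1 / 4, by norm_num, betaDensity_lt_betaDensity_one_sub hw hwb (by norm_num)⟩
      _ = ∫ p in 1 / 2..1, betaDensity b w p := by
          rw [integral_comp_sub_left (betaDensity b w)]; norm_num
  linarith

end Beta

theorem sum_ofFn_eq_of_eq_sum_append {α M : Type*} [Fintype α] [AddCommMonoid M]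
    {F : List α → M} (hF : ∀ ε, F ε = ∑ a, F (ε ++ [a])) (ε : List α) (n : ℕ) :
    ∑ v : Fin n → α, F (ε ++ List.ofFn v) = F ε := by
  induction n generalizing ε with
  | zero => simp
  | succ n ih =>
    rw [← (Fin.consEquiv fun _ => α).sum_comp, Fintype.sum_prod_type, hF ε]
    refine Finset.sum_congr rfl fun a _ => ?_
    simpa [Fin.consEquiv, List.ofFn_succ] using ih (ε ++ [a])

section Histories

variable {b w : ℕ}

noncomputable def blackFraction (b w : ℕ) (ε : List Bool) : ℝ :=
  ((b : ℝ) + ε.count true) / ((b : ℝ) + w + ε.length)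

def IsBalanced (b w : ℕ) (ε : List Bool) : Prop :=
  b + ε.count true = w + ε.count false

def HasBalancedPrefix (b w : ℕ) (ε : List Bool) : Prop :=
  ∃ k ≤ ε.length, IsBalanced b w (ε.take k)

instance : DecidablePred (HasBalancedPrefix b w) := fun ε =>
  inferInstanceAs
    (Decidable (∃ k ≤ ε.length, b + (ε.take k).count true = w + (ε.take k).count false))

noncomputable def stoppedFraction (b w : ℕ) (ε : List Bool) : ℝ :=
  if HasBalancedPrefix b w ε then 1 / 2 else blackFraction b w ε

lemma blackFraction_le_one (ε : List Bool) : blackFraction b w ε ≤ 1 := by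
  have : (ε.count true : ℝ) ≤ ε.length := by exact_mod_cast ε.count_le_length
  exact div_le_one_of_le₀ (by linarith) (by positivity)

lemma blackFraction_of_isBalanced {ε : List Bool} (h : IsBalanced b w ε) (hbw : 0 < b + w) :
    blackFraction b w ε = 1 / 2 := by
  have hlen : (ε.length : ℝ) = ε.count true + ε.count false := by
    exact_mod_cast (List.count_true_add_count_false ε).symm
  have hR : (b : ℝ) + ε.count true = w + ε.count false := by exact_mod_cast h
  have hpos : (0 : ℝ) < b + ε.count true := by
    exact_mod_cast (show 0 < b + ε.count true by unfold IsBalanced at h; omega)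
  rw [blackFraction, hlen, div_eq_iff (by linarith)]
  linarith

lemma blackFraction_eq_average (hbw : 0 < b + w) (ε : List Bool) :
    blackFraction b w ε = blackFraction b w ε * blackFraction b w (ε ++ [true]) +
      (1 - blackFraction b w ε) * blackFraction b w (ε ++ [false]) := by
  have hN : (0 : ℝ) < b + w + ε.length := by
    have : (0 : ℝ) < b + w := by exact_mod_cast hbw
    positivity
  have htrue : (ε ++ [true]).count true = ε.count true + 1 := by simp
  have hfalse : (ε ++ [false]).count true = ε.count true := by simp
  simp only [blackFraction, htrue, hfalse, List.length_append, List.length_singleton]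
  push_cast
  field_simp
  ring

lemma hasBalancedPrefix_append_singleton (ε : List Bool) (a : Bool) :
    HasBalancedPrefix b w (ε ++ [a]) ↔
      HasBalancedPrefix b w ε ∨ IsBalanced b w (ε ++ [a]) := by
  constructor
  · rintro ⟨k, hk, hbal⟩
    rw [List.length_append, List.length_singleton, Nat.le_add_one_iff] at hk
    rcases hk with hk | rfl
    · exact .inl ⟨k, hk, by rwa [List.take_append_of_le_length hk] at hbal⟩
    · exact .inr (by rwa [List.take_of_length_le (by simp)] at hbal)
  · rintro (⟨k, hk, hbal⟩ | hbal)
    · refine ⟨k, ?_, by rwa [List.take_append_of_le_length hk]⟩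
      rw [List.length_append, List.length_singleton]
      omega
    · exact ⟨_, le_rfl, by rwa [List.take_length]⟩

lemma stoppedFraction_nil (hbw : b ≠ w) : stoppedFraction b w [] = b / (b + w) := by
  simp [stoppedFraction, HasBalancedPrefix, IsBalanced, hbw, blackFraction]

lemma stoppedFraction_eq_average (hbw : 0 < b + w) (ε : List Bool) :
    stoppedFraction b w ε = blackFraction b w ε * stoppedFraction b w (ε ++ [true]) +
      (1 - blackFraction b w ε) * stoppedFraction b w (ε ++ [false]) := by
  by_cases h : HasBalancedPrefix b w ε
  · simp only [stoppedFraction, h, (hasBalancedPrefix_append_singleton ε _).2 (.inl h),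
      ↓reduceIte]
    ring
  · have hchild (a : Bool) : stoppedFraction b w (ε ++ [a]) = blackFraction b w (ε ++ [a]) := by
      unfold stoppedFraction
      split_ifs with ha
      · have hbal := ((hasBalancedPrefix_append_singleton ε a).1 ha).resolve_left h
        exact (blackFraction_of_isBalanced hbal hbw).symm
      · rfl
    rw [hchild, hchild, stoppedFraction, if_neg h, ← blackFraction_eq_average hbw]

end Histories

section Draws

variable {Ω : Type*} {X : ℕ → Ω → Bool}

def firstDraws (X : ℕ → Ω → Bool) (n : ℕ) (ω : Ω) : List Bool :=
  List.ofFn fun i : Fin n => X i ω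

lemma mem_drawsEq {ε : List Bool} {ω : Ω} :
    ω ∈ drawsEq X ε ↔ firstDraws X ε.length ω = ε :=
  Iff.rfl

lemma firstDraws_succ (n : ℕ) (ω : Ω) :
    firstDraws X (n + 1) ω = firstDraws X n ω ++ [X n ω] := by
  rw [firstDraws, List.ofFn_succ', List.concat_eq_append]; rfl

lemma take_firstDraws {k n : ℕ} (h : k ≤ n) (ω : Ω) :
    (firstDraws X n ω).take k = firstDraws X k ω := by
  apply List.ext_getElem (by simp only [firstDraws, List.length_take, List.length_ofFn]; omega)
  intro i h1 h2
  simp [firstDraws]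

lemma count_firstDraws (a : Bool) (n : ℕ) (ω : Ω) :
    (firstDraws X n ω).count a = ((Finset.range n).filter fun i => X i ω = a).card := by
  induction n with
  | zero => simp [firstDraws]
  | succ n ih =>
    rw [firstDraws_succ, List.count_append, ih, Finset.range_add_one, Finset.filter_insert]
    by_cases h : X n ω = a <;> simp [h]

lemma hasBalancedPrefix_firstDraws_iff {b w n : ℕ} {ω : Ω} :
    HasBalancedPrefix b w (firstDraws X n ω) ↔
      ∃ k ≤ n, blackCount X b k ω = whiteCount X w k ω := by
  simp only [HasBalancedPrefix, firstDraws, List.length_ofFn]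
  refine exists_congr fun k => and_congr_right fun hk => ?_
  rw [← firstDraws, take_firstDraws hk, IsBalanced, blackCount, whiteCount, count_firstDraws,
    count_firstDraws]

lemma drawsEq_nil : drawsEq X [] = Set.univ := by
  ext ω
  simp [mem_drawsEq, firstDraws]

lemma drawsEq_append_singleton (ε : List Bool) (a : Bool) :
    drawsEq X (ε ++ [a]) = drawsEq X ε ∩ X ε.length ⁻¹' {a} := by
  ext ω
  simp only [Set.mem_inter_iff, mem_drawsEq, List.length_append, List.length_singleton,
    firstDraws_succ, List.append_singleton_inj, Set.mem_preimage, Set.mem_singleton_iff]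

lemma drawsEq_ofFn {n : ℕ} (v : Fin n → Bool) :
    drawsEq X (List.ofFn v) = (fun ω (i : Fin n) => X i ω) ⁻¹' {v} := by
  ext ω
  simp [mem_drawsEq, firstDraws, List.ofFn_inj]

variable [MeasurableSpace Ω] {P : Measure Ω}

lemma measurableSet_drawsEq (hX : ∀ i, Measurable (X i)) (ε : List Bool) :
    MeasurableSet (drawsEq X ε) := by
  induction ε using List.reverseRecOn with
  | nil => exact drawsEq_nil ▸ MeasurableSet.univ
  | append_singleton ε a ih =>
    rw [drawsEq_append_singleton]
    exact ih.inter (hX _ (measurableSet_singleton a))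

variable [IsFiniteMeasure P]

lemma measureReal_drawsEq_eq_sum (hX : ∀ i, Measurable (X i)) (ε : List Bool) :
    P.real (drawsEq X ε) = ∑ a, P.real (drawsEq X (ε ++ [a])) := by
  have hcompl : X ε.length ⁻¹' {false} = (X ε.length ⁻¹' {true})ᶜ := by ext; simp
  rw [Fintype.sum_bool, drawsEq_append_singleton, drawsEq_append_singleton, hcompl,
    ← Set.sdiff_eq, measureReal_inter_add_sdiff (hX _ (measurableSet_singleton true))]

lemma measureReal_exists_le_balanced (hX : ∀ i, Measurable (X i)) (b w n : ℕ) :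
    P.real {ω | ∃ k ≤ n, blackCount X b k ω = whiteCount X w k ω} =
      ∑ v : Fin n → Bool with HasBalancedPrefix b w (List.ofFn v),
        P.real (drawsEq X (List.ofFn v)) := by
  have hA : {ω | ∃ k ≤ n, blackCount X b k ω = whiteCount X w k ω} =
      (fun ω (i : Fin n) => X i ω) ⁻¹' {v | HasBalancedPrefix b w (List.ofFn v)} := by
    ext ω
    exact hasBalancedPrefix_firstDraws_iff.symm
  simp_rw [drawsEq_ofFn]
  rw [sum_measureReal_preimage_singleton _ fun v _ =>
    drawsEq_ofFn (X := X) v ▸ measurableSet_drawsEq hX _, hA, Finset.coe_filter_univ]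

end Draws

namespace IsPolyaUrn

variable {Ω : Type*} [MeasurableSpace Ω] {P : Measure Ω} {X : ℕ → Ω → Bool} {b w : ℕ}

lemma measureReal_drawsEq_append_true (hX : IsPolyaUrn P X b w) (ε : List Bool) :
    P.real (drawsEq X (ε ++ [true])) = blackFraction b w ε * P.real (drawsEq X ε) := by
  rw [measureReal_def, hX.2 ε, ENNReal.toReal_mul, ENNReal.toReal_ofReal (by positivity)]
  rfl

lemma measureReal_drawsEq_append_false [IsFiniteMeasure P] (hX : IsPolyaUrn P X b w)
    (ε : List Bool) :
    P.real (drawsEq X (ε ++ [false])) = (1 - blackFraction b w ε) * P.real (drawsEq X ε) := by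
  have := measureReal_drawsEq_eq_sum (P := P) hX.1 ε
  rw [Fintype.sum_bool, hX.measureReal_drawsEq_append_true] at this
  linarith

variable [IsProbabilityMeasure P]

lemma sum_measureReal_drawsEq (hX : IsPolyaUrn P X b w) (n : ℕ) :
    ∑ v : Fin n → Bool, P.real (drawsEq X (List.ofFn v)) = 1 := by
  simpa [drawsEq_nil] using
    sum_ofFn_eq_of_eq_sum_append (measureReal_drawsEq_eq_sum (P := P) hX.1) [] n

lemma sum_stoppedFraction_mul (hX : IsPolyaUrn P X b w) (hbw : 0 < b + w) (n : ℕ) :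
    ∑ v : Fin n → Bool, stoppedFraction b w (List.ofFn v) * P.real (drawsEq X (List.ofFn v)) =
      stoppedFraction b w [] := by
  have hF (ε : List Bool) : stoppedFraction b w ε * P.real (drawsEq X ε) =
      ∑ a, stoppedFraction b w (ε ++ [a]) * P.real (drawsEq X (ε ++ [a])) := by
    rw [Fintype.sum_bool, hX.measureReal_drawsEq_append_true,
      hX.measureReal_drawsEq_append_false, stoppedFraction_eq_average hbw ε]
    ring
  simpa [drawsEq_nil] using sum_ofFn_eq_of_eq_sum_append hF [] n

lemma measureReal_exists_le_balanced_le (hX : IsPolyaUrn P X b w) (hwb : w < b) (n : ℕ) :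
    P.real {ω | ∃ k ≤ n, blackCount X b k ω = whiteCount X w k ω} ≤ 2 * w / (b + w) := by
  have hterm (ε : List Bool) : stoppedFraction b w ε * P.real (drawsEq X ε) +
      1 / 2 * (if HasBalancedPrefix b w ε then P.real (drawsEq X ε) else 0) ≤
        P.real (drawsEq X ε) := by
    unfold stoppedFraction
    split_ifs
    · linarith
    · rw [mul_zero, add_zero]
      exact mul_le_of_le_one_left measureReal_nonneg (blackFraction_le_one ε)
  have hsum := Finset.sum_le_sum (s := Finset.univ) fun (v : Fin n → Bool) _ =>
    hterm (List.ofFn v)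
  rw [Finset.sum_add_distrib, ← Finset.mul_sum, ← Finset.sum_filter,
    hX.sum_stoppedFraction_mul (by omega), hX.sum_measureReal_drawsEq, stoppedFraction_nil hwb.ne',
    ← measureReal_exists_le_balanced hX.1] at hsum
  have hfrac : (b : ℝ) / (b + w) = 1 - w / (b + w) := by
    have : (0 : ℝ) < b + w := by exact_mod_cast (show 0 < b + w by omega)
    field_simp
    ring
  rw [mul_div_assoc]
  linarith

theorem measure_exists_balanced_lt_one (hX : IsPolyaUrn P X b w) (hwb : w < b) :
    P {ω | ∃ n, blackCount X b n ω = whiteCount X w n ω} < 1 := by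
  set A : ℕ → Set Ω := fun n => {ω | ∃ k ≤ n, blackCount X b k ω = whiteCount X w k ω}
  have hA : {ω | ∃ n, blackCount X b n ω = whiteCount X w n ω} = ⋃ n, A n := by
    ext ω
    simp only [A, Set.mem_iUnion]
    exact ⟨fun ⟨n, h⟩ => ⟨n, n, le_rfl, h⟩, fun ⟨_, k, _, h⟩ => ⟨k, h⟩⟩
  have hmono : Monotone A := fun m n hmn ω ⟨k, hk, h⟩ => ⟨k, hk.trans hmn, h⟩
  have hbound (n : ℕ) : P (A n) ≤ ENNReal.ofReal (2 * w / (b + w)) := by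
    rw [← ofReal_measureReal]
    exact ENNReal.ofReal_le_ofReal (hX.measureReal_exists_le_balanced_le hwb n)
  have hlt : ENNReal.ofReal (2 * w / (b + w)) < 1 := by
    have hpos : (0 : ℝ) < b + w := by exact_mod_cast (show 0 < b + w by omega)
    have : (w : ℝ) < b := by exact_mod_cast hwb
    rw [ENNReal.ofReal_lt_one, div_lt_one hpos]
    linarith
  rw [hA, hmono.measure_iUnion]
  exact (iSup_le hbound).trans_lt hlt

end IsPolyaUrn

/-- The equalization probability `2·F^Beta_{b,w}(1/2)` of a Pólya urn with `b > w ≥ 1`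
is strictly between 0 and 1; in particular equalization is not almost sure. -/
theorem polya_equalization_lt_one {Ω : Type*} [MeasurableSpace Ω] (P : Measure Ω)
    [IsProbabilityMeasure P] (X : ℕ → Ω → Bool) (b w : ℕ)
    (hbw : b > w) (hw : 1 ≤ w) (hX : IsPolyaUrn P X b w) :
    0 < 2 * betaCDF b w (1 / 2) ∧ 2 * betaCDF b w (1 / 2) < 1 ∧
      P {ω | ∃ n, blackCount X b n ω = whiteCount X w n ω} < 1 :=
  ⟨by linarith [betaCDF_half_pos (hw.trans hbw.le) hw], two_mul_betaCDF_half_lt_one hw hbw,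
    hX.measure_exists_balanced_lt_one hbw⟩
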